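/- Let A = Fin 3 with elements 0, 1, 2, and let F be the radius-1 one-sided CA over A with F(c)(i) = ρ_{c(i+1)}(c(i)), where ρ₀ = ρ₂ swaps 1 and 2 (fixing 0) and ρ₁ is the 3-cycle 0↦1, 1↦2, 2↦0. Then the topological entropy of F equals 1/2 in base-2 logarithm, i.e., h((ℕ → A), F) = (log 2)/2 when entropy is defined with the natural logarithm. -/

import Mathlib

/-- The one-sided shift map `σ(c)(i) = c(i+1)`. -/
def shift {A : Type*} (c : ℕ → A) : ℕ → A := fun i => c (i + 1)

/-- Discrete uniformity on the (finite) alphabet `Fin n`. -/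
instance (n : ℕ) : UniformSpace (Fin n) := ⊥

/-- The permutations `ρ₀ = ρ₂ = (0)(12)` and `ρ₁ = (012)` (i.e. `0↦1, 1↦2, 2↦0`),
as a family indexed by the right neighbor: `rho b x = ρ_b(x)`. -/
def rho : Fin 3 → Fin 3 → Fin 3 := ![![0, 2, 1], ![1, 2, 0], ![0, 2, 1]]

/-- The radius-1 one-sided CA `F(c)(i) = ρ_{c(i+1)}(c(i))` of the example. -/
def Fex : (ℕ → Fin 3) → ℕ → Fin 3 := fun c i => rho (c (i + 1)) (c i)

/-!
Every `1` turns into a `2` and every `2` comes from a `1`. Following the right neighbour of a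
column shows that a `2` and a later `1` in the same column are an odd time apart, so the nonzero
entries of a column at even times are all equal, and an entry at an odd time is determined by the
entries just before and after it. For a radius-one CA the space-time diagram on `[0, m] × [0, n)`
is determined by the initial row on `[0, m)` and column `m`, so there are at most
`3 ^ m * 2 ^ (n / 2 + 2)` such traces, and every cylinder entourage has entropy at most
`log 2 / 2`. Conversely every `0`/`1` pattern at the even times of column `0` occurs, which gives
the matching lower bound: a column made of blocks `1 2` and `0 0` coded by a bit sequence `u` is
driven by the column of the same kind coded by the differences of `u`, delayed by one step.
-/

open Set Filter Uniformity Dynamics ENNReal ExpGrowth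

def cylinderRel (A : Type*) (m : ℕ) : SetRel (ℕ → A) (ℕ → A) := {p | ∀ i ≤ m, p.1 i = p.2 i}

lemma cylinderRel_anti {A : Type*} : Antitone (cylinderRel A) :=
  fun _ _ hmn _ hp i hi => hp i (hi.trans hmn)

lemma hasBasis_uniformity_cylinderRel (A : Type*) [UniformSpace A] [DiscreteUniformity A] :
    (𝓤 (ℕ → A)).HasBasis (fun _ => True) (cylinderRel A) := by
  have hU : 𝓤 (ℕ → A) = ⨅ i, 𝓟 {p : (ℕ → A) × (ℕ → A) | p.1 i = p.2 i} := by
    simp only [Pi.uniformity, DiscreteUniformity.eq_principal_setRelId, comap_principal]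
    rfl
  rw [hU]
  refine (hasBasis_iInf_principal_finite _).to_hasBasis (fun s hs => ?_) (fun m _ => ?_)
  · obtain ⟨m, hm⟩ := hs.bddAbove
    exact ⟨m, trivial, fun p hp => mem_iInter₂.2 fun i hi => hp i (hm hi)⟩
  · exact ⟨Iic m, finite_Iic m, fun p hp i hi => mem_iInter₂.1 hp i hi⟩

section Counting

variable {X : Type*} {T : X → X} {F : Set X} {U : SetRel X X} {n : ℕ}

lemma coverMincard_le_card_of_dynEntourage {β : Type*} [Fintype β] (θ : X → β)
    (hθ : ∀ x y, θ x = θ y → (x, y) ∈ dynEntourage T U n) :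
    coverMincard T F U n ≤ Fintype.card β := by
  classical
  let s : Finset X := Finset.univ.image fun b : range θ => b.2.choose
  have hcover : IsDynCoverOf T F U n s := fun x _ =>
    ⟨_, Finset.mem_image_of_mem _ (Finset.mem_univ ⟨θ x, x, rfl⟩),
      hθ _ _ (Exists.choose_spec (p := fun y => θ y = θ x) _).symm⟩
  refine hcover.coverMincard_le_card.trans ?_
  exact_mod_cast Finset.card_image_le.trans (set_fintype_card_le_univ (range θ))

lemma card_le_coverMincard_of_dynEntourage {β : Type*} [Fintype β] {φ : β → X}
    (hF : ∀ a, φ a ∈ F)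
    (hφ : ∀ a b x, (φ a, x) ∈ dynEntourage T U n → (φ b, x) ∈ dynEntourage T U n → a = b) :
    (Fintype.card β : ℕ∞) ≤ coverMincard T F U n := by
  classical
  refine le_iInf₂ fun t ht => ?_
  choose center hmem hball using fun a => ht (hF a)
  have hinj : Function.Injective center := fun a b h => hφ a b _ (hball a) (h ▸ hball b)
  exact_mod_cast Finset.card_le_card_of_injOn center (fun a _ => hmem a) hinj.injOn

lemma natCast_mul_coverEntropyEntourage (T : X → X) (F : Set X) (U : SetRel X X) {k : ℕ}
    (hk : k ≠ 0) :
    k * coverEntropyEntourage T F U = expGrowthSup fun n => coverMincard T F U (k * n) :=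
  (Monotone.expGrowthSup_comp_mul
    (fun _ _ h => ENat.toENNReal_mono (coverMincard_monotone_time T F U h)) hk).symm

end Counting

lemma expGrowthSup_eq_log_of_pow_le_of_le {u : ℕ → ℝ≥0∞} {b C : ℝ≥0∞} (hC : C ≠ ∞)
    (hlow : ∀ n, b ^ n ≤ u n) (hup : ∀ n, u n ≤ C * b ^ n) : expGrowthSup u = log b :=
  le_antisymm ((expGrowthSup_le_of_eventually_le hC (.of_forall hup)).trans_eq expGrowthSup_pow)
    (expGrowthSup_pow.symm.trans_le (expGrowthSup_monotone hlow))

section RadiusOne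

variable {A : Type*} {F : (ℕ → A) → ℕ → A} {f : A → A → A}

lemma iterate_succ_apply_of_localRule (hF : ∀ c i, F c i = f (c i) (c (i + 1)))
    (c : ℕ → A) (k i : ℕ) : F^[k + 1] c i = f (F^[k] c i) (F^[k] c (i + 1)) := by
  rw [Function.iterate_succ_apply', hF]

lemma iterate_apply_eq_of_localRule (hF : ∀ c i, F c i = f (c i) (c (i + 1)))
    {x : ℕ → ℕ → A} (hx : ∀ i k, x i (k + 1) = f (x i k) (x (i + 1) k)) (k i : ℕ) :
    F^[k] (fun j => x j 0) i = x i k := by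
  induction k generalizing i with
  | zero => rfl
  | succ k ih => rw [iterate_succ_apply_of_localRule hF, ih, ih, hx]

lemma iterate_eq_of_eq_on_column (hF : ∀ c i, F c i = f (c i) (c (i + 1)))
    {c c' : ℕ → A} {m n : ℕ} (hrow : ∀ i < m, c i = c' i)
    (hcol : ∀ k ≤ n, F^[k] c m = F^[k] c' m) :
    ∀ k ≤ n, ∀ i ≤ m, F^[k] c i = F^[k] c' i := by
  intro k
  induction k with
  | zero =>
    intro _ i hi
    rcases hi.lt_or_eq with hi | rfl
    exacts [hrow i hi, hcol 0 (Nat.zero_le n)]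
  | succ k ih =>
    intro hk i hi
    rcases hi.lt_or_eq with hi | rfl
    · rw [iterate_succ_apply_of_localRule hF, iterate_succ_apply_of_localRule hF,
        ih (by omega) i hi.le, ih (by omega) (i + 1) hi]
    · exact hcol (k + 1) hk

end RadiusOne

lemma Fex_apply (c : ℕ → Fin 3) (i : ℕ) : Fex c i = rho (c (i + 1)) (c i) := rfl

lemma Fex_iterate_succ_apply (c : ℕ → Fin 3) (k i : ℕ) :
    Fex^[k + 1] c i = rho (Fex^[k] c (i + 1)) (Fex^[k] c i) :=
  iterate_succ_apply_of_localRule (f := fun a b => rho b a) Fex_apply c k i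

lemma rho_apply_one (b : Fin 3) : rho b 1 = 2 := by fin_cases b <;> rfl

lemma eq_one_of_rho_eq_two {b y : Fin 3} (h : rho b y = 2) : y = 1 := by
  revert h; fin_cases b <;> fin_cases y <;> decide

lemma eq_one_or_eq_two_of_rho_eq_one {b y : Fin 3} (h : rho b y = 1) : b = 1 ∨ y = 2 := by
  revert h; fin_cases b <;> fin_cases y <;> decide

lemma eq_one_or_rho_two_eq_one (b : Fin 3) : b = 1 ∨ rho b 2 = 1 := by
  fin_cases b <;> decide

lemma eq_one_or_eq_two_of_ne_zero {x : Fin 3} (h : x ≠ 0) : x = 1 ∨ x = 2 := by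
  revert h; fin_cases x <;> decide

def interpolate (x z : Fin 3) : Fin 3 := if x = 1 then 2 else if z = 2 then 1 else 0

lemma rho_eq_interpolate (a b b' : Fin 3) :
    rho b a = interpolate a (rho (rho b' b) (rho b a)) := by
  revert a b b'; decide

namespace Fex

variable {c : ℕ → Fin 3} {i k : ℕ}

lemma iterate_succ_eq_two (h : Fex^[k] c i = 1) : Fex^[k + 1] c i = 2 := by
  rw [Fex_iterate_succ_apply, h, rho_apply_one]

lemma iterate_eq_one_of_succ_eq_two (h : Fex^[k + 1] c i = 2) : Fex^[k] c i = 1 :=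
  eq_one_of_rho_eq_two ((Fex_iterate_succ_apply c k i).symm.trans h)

lemma iterate_add_two_mul_ne_one (d : ℕ) (h : Fex^[k] c i = 2) : Fex^[k + 2 * d] c i ≠ 1 := by
  induction d using Nat.strong_induction_on generalizing k i with
  | _ d ih =>
  rcases d with _ | e
  · simp [h]
  intro h1
  have hstep := Fex_iterate_succ_apply c k i
  rw [h] at hstep
  obtain hb | hb := eq_one_or_rho_two_eq_one (Fex^[k] c (i + 1))
  · -- the `2` turns into `0`: the neighbour holds `1` at time `k`, hence `2` at time `k + 1`
    rw [show k + 2 * (e + 1) = k + 2 * e + 1 + 1 by ring, Fex_iterate_succ_apply] at h1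
    obtain hb' | hy := eq_one_or_eq_two_of_rho_eq_one h1
    · exact ih e (by omega) (iterate_succ_eq_two hb)
        (by rwa [show k + 1 + 2 * e = k + 2 * e + 1 by ring])
    · exact ih e (by omega) h (iterate_eq_one_of_succ_eq_two hy)
  · exact ih e (by omega) (iterate_succ_eq_two (hstep.trans hb))
      (by rwa [show k + 1 + 1 + 2 * e = k + 2 * (e + 1) by ring])

lemma iterate_add_two_mul_ne_two (d : ℕ) (h : Fex^[k] c i = 1) : Fex^[k + 2 * d] c i ≠ 2 := by
  intro h2
  rcases d with _ | d
  · simp [h] at h2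
  refine iterate_add_two_mul_ne_one d (iterate_succ_eq_two h) (iterate_eq_one_of_succ_eq_two ?_)
  rwa [show k + 1 + 2 * d + 1 = k + 2 * (d + 1) by ring]

lemma iterate_two_mul_eq_of_ne_zero {l : ℕ} (hk : Fex^[2 * k] c i ≠ 0)
    (hl : Fex^[2 * l] c i ≠ 0) : Fex^[2 * k] c i = Fex^[2 * l] c i := by
  wlog hkl : k ≤ l generalizing k l
  · exact (this hl hk (by omega)).symm
  obtain ⟨d, rfl⟩ := Nat.exists_eq_add_of_le hkl
  rw [mul_add] at hl ⊢
  obtain hk | hk := eq_one_or_eq_two_of_ne_zero hk <;>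
    obtain hl | hl := eq_one_or_eq_two_of_ne_zero hl
  · rw [hk, hl]
  · exact absurd hl (iterate_add_two_mul_ne_two d hk)
  · exact absurd hl (iterate_add_two_mul_ne_one d hk)
  · rw [hk, hl]

lemma iterate_two_mul_eq_ite {K : ℕ} (hk : Fex^[2 * k] c i ≠ 0) (hkK : k ≤ K) :
    Fex^[2 * k] c i = if ∃ l ≤ K, Fex^[2 * l] c i = 2 then 2 else 1 := by
  split_ifs with htwo
  · obtain ⟨l, -, hl⟩ := htwo
    exact (iterate_two_mul_eq_of_ne_zero hk (by simp [hl])).trans hl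
  · exact (eq_one_or_eq_two_of_ne_zero hk).resolve_right fun h => htwo ⟨k, hkK, h⟩

lemma iterate_succ_eq_interpolate (c : ℕ → Fin 3) (k i : ℕ) :
    Fex^[k + 1] c i = interpolate (Fex^[k] c i) (Fex^[k + 2] c i) := by
  rw [Fex_iterate_succ_apply c (k + 1), Fex_iterate_succ_apply, Fex_iterate_succ_apply]
  exact rho_eq_interpolate _ _ _

lemma iterate_eq_of_zero_iff {c c' : ℕ → Fin 3} {K : ℕ}
    (hzero : ∀ k ≤ K, (Fex^[2 * k] c i = 0 ↔ Fex^[2 * k] c' i = 0))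
    (htwo : (∃ k ≤ K, Fex^[2 * k] c i = 2) ↔ (∃ k ≤ K, Fex^[2 * k] c' i = 2)) :
    ∀ j ≤ 2 * K, Fex^[j] c i = Fex^[j] c' i := by
  have heven : ∀ k ≤ K, Fex^[2 * k] c i = Fex^[2 * k] c' i := by
    intro k hk
    by_cases h0 : Fex^[2 * k] c i = 0
    · rw [h0, ((hzero k hk).1 h0)]
    · rw [iterate_two_mul_eq_ite h0 hk, iterate_two_mul_eq_ite (mt (hzero k hk).2 h0) hk,
        if_congr htwo rfl rfl]
  intro j hj
  obtain ⟨k, rfl | rfl⟩ := Nat.even_or_odd' j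
  · exact heven k (by omega)
  · rw [iterate_succ_eq_interpolate c, iterate_succ_eq_interpolate c',
      show 2 * k + 2 = 2 * (k + 1) by ring, heven k (by omega), heven (k + 1) (by omega)]

end Fex

def traceCode (m K : ℕ) (c : ℕ → Fin 3) : (Fin m → Fin 3) × (Fin (K + 1) → Bool) × Bool :=
  (fun i => c i, fun k => decide (Fex^[2 * k] c m = 0), decide (∃ k ≤ K, Fex^[2 * k] c m = 2))

lemma mem_dynEntourage_of_traceCode_eq {m K : ℕ} {c c' : ℕ → Fin 3}
    (h : traceCode m K c = traceCode m K c') :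
    (c, c') ∈ dynEntourage Fex (cylinderRel (Fin 3) m) (2 * K + 1) := by
  simp only [traceCode, Prod.mk.injEq, funext_iff, decide_eq_decide, Fin.forall_iff] at h
  obtain ⟨hrow, hzero, htwo⟩ := h
  have hcol := Fex.iterate_eq_of_zero_iff (fun k hk => hzero k (by omega)) htwo
  exact mem_dynEntourage.2 fun k hk =>
    iterate_eq_of_eq_on_column (f := fun a b => rho b a) Fex_apply hrow hcol k (by omega)

lemma coverMincard_cylinderRel_le (m n : ℕ) :
    coverMincard Fex univ (cylinderRel (Fin 3) m) (2 * n) ≤ 3 ^ m * 2 ^ (n + 1) * 2 := by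
  refine (coverMincard_monotone_time _ _ _ (Nat.le_succ _)).trans ?_
  refine (coverMincard_le_card_of_dynEntourage (traceCode m n)
    fun _ _ => mem_dynEntourage_of_traceCode_eq).trans_eq ?_
  simp [mul_assoc]

def pairColumn (u : ℕ → Bool) (k : ℕ) : Fin 3 :=
  if u (k / 2) then (if k % 2 = 0 then 1 else 2) else 0

/-- The value at `0` is arbitrary: `pairColumn` turns it into `0` or `2`, and `rho 0 = rho 2`. -/
def diffSeq (u : ℕ → Bool) : ℕ → Bool
  | 0 => false
  | l + 1 => xor (u l) (u (l + 1))

lemma pairColumn_two_mul (u : ℕ → Bool) (l : ℕ) :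
    pairColumn u (2 * l) = if u l then 1 else 0 := by
  simp [pairColumn]

lemma pairColumn_two_mul_add_one (u : ℕ → Bool) (l : ℕ) :
    pairColumn u (2 * l + 1) = if u l then 2 else 0 := by
  simp [pairColumn, Nat.add_div, Nat.add_mod]

lemma pairColumn_succ (u : ℕ → Bool) (k : ℕ) :
    pairColumn u (k + 1) = rho (pairColumn (diffSeq u) (k + 1)) (pairColumn u k) := by
  obtain ⟨l, rfl | rfl⟩ := Nat.even_or_odd' k
  · rw [pairColumn_two_mul_add_one, pairColumn_two_mul_add_one, pairColumn_two_mul]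
    cases u l <;> cases diffSeq u l <;> rfl
  · rw [show 2 * l + 1 + 1 = 2 * (l + 1) by ring, pairColumn_two_mul, pairColumn_two_mul,
      pairColumn_two_mul_add_one, diffSeq]
    cases u l <;> cases u (l + 1) <;> rfl

def pairConfig (s : ℕ → Bool) (i : ℕ) : Fin 3 := pairColumn (diffSeq^[i] s) i

lemma Fex_iterate_pairConfig (s : ℕ → Bool) (k i : ℕ) :
    Fex^[k] (pairConfig s) i = pairColumn (diffSeq^[i] s) (i + k) := by
  refine iterate_apply_eq_of_localRule (f := fun a b => rho b a)
    (x := fun i k => pairColumn (diffSeq^[i] s) (i + k)) Fex_apply (fun i k => ?_) k i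
  rw [← add_assoc, pairColumn_succ, Function.iterate_succ_apply', add_right_comm]

lemma Fex_iterate_two_mul_pairConfig (s : ℕ → Bool) (j : ℕ) :
    Fex^[2 * j] (pairConfig s) 0 = if s j then 1 else 0 := by
  rw [Fex_iterate_pairConfig, zero_add, pairColumn_two_mul, Function.iterate_zero_apply]

lemma two_pow_le_coverMincard (n : ℕ) :
    2 ^ n ≤ coverMincard Fex univ (cylinderRel (Fin 3) 0) (2 * n) := by
  let φ : (Fin n → Bool) → ℕ → Fin 3 := fun w =>
    pairConfig fun j => if h : j < n then w ⟨j, h⟩ else false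
  refine le_of_eq_of_le (by simp) (card_le_coverMincard_of_dynEntourage (φ := φ)
    (fun _ => mem_univ _) fun w w' x hw hw' => funext fun j => ?_)
  have hcol : ∀ w, (φ w, x) ∈ dynEntourage Fex (cylinderRel (Fin 3) 0) (2 * n) →
      Fex^[2 * j] x 0 = if w j then 1 else 0 := fun w hw => by
    have h0 : Fex^[2 * j] (φ w) 0 = Fex^[2 * j] x 0 :=
      mem_dynEntourage.1 hw (2 * j) (by omega) 0 le_rfl
    simp [← h0, φ, Fex_iterate_two_mul_pairConfig]
  have := (hcol w hw).symm.trans (hcol w' hw')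
  revert this
  cases w j <;> cases w' j <;> decide

lemma coverEntropyEntourage_cylinderRel (m : ℕ) :
    coverEntropyEntourage Fex univ (cylinderRel (Fin 3) m) = ((Real.log 2 / 2 : ℝ) : EReal) := by
  have hgrowth : expGrowthSup (fun n => (coverMincard Fex univ (cylinderRel (Fin 3) m) (2 * n) :
      ℝ≥0∞)) = log 2 := by
    refine expGrowthSup_eq_log_of_pow_le_of_le (C := 3 ^ m * 4) (by finiteness) (fun n => ?_)
      (fun n => ?_)
    · have := (two_pow_le_coverMincard n).trans
        (coverMincard_antitone Fex univ _ (cylinderRel_anti (Nat.zero_le m)))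
      exact_mod_cast ENat.toENNReal_mono this
    · have := ENat.toENNReal_mono (coverMincard_cylinderRel_le m n)
      refine this.trans_eq ?_
      push_cast
      ring
  have htwo := natCast_mul_coverEntropyEntourage Fex univ (cylinderRel (Fin 3) m) two_ne_zero
  rw [hgrowth, log_pos_real two_ne_zero ofNat_ne_top, toReal_ofNat, ← EReal.coe_natCast,
    Nat.cast_ofNat] at htwo
  rw [EReal.coe_div, eq_comm, EReal.div_eq_iff (by simp) (by simp) (by simp), mul_comm, htwo]

/-- The topological entropy of the example CA `F` is `1/2` in base-2 logarithm, i.e.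
`(log 2)/2` in natural-logarithm units. -/
theorem entropy_of_example_CA :
    Dynamics.coverEntropy Fex Set.univ = ((Real.log 2 / 2 : ℝ) : EReal) := by
  rw [coverEntropy_eq_iSup_basis (hasBasis_uniformity_cylinderRel (Fin 3))]
  simp [coverEntropyEntourage_cylinderRel]
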